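/- Let L be a first-order language, let M be an L-structure, and let ⫫ be a ternary relation on the finitely generated substructures of M satisfying (Inv), (Ex-left), (Ex-right), (Sta-left), (Sta-right), (Tr-left) and (Tr-right). Then ⫫ satisfies (Mon-left) and (Mon-right), and hence is a SWIR on M. -/
import Mathlib


open FirstOrder

namespace Swir

variable {L : Language} {M : Type*} [L.Structure M]

/-- The automorphism `g` fixes the substructure `A` pointwise. -/
def Fixes (g : M ≃[L] M) (A : L.Substructure M) : Prop :=
  ∀ a ∈ A, g a = a

/-- The image `gA` of the substructure `A` under the automorphism `g`. -/
def aimg (g : M ≃[L] M) (A : L.Substructure M) : L.Substructure M :=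
  A.map g.toHom

/-- `B ≡_A B'` : there is an automorphism of `M` fixing `A` pointwise and mapping `B` onto `B'`. -/
def EquivOver (A B B' : L.Substructure M) : Prop :=
  ∃ g : M ≃[L] M, Fixes g A ∧ aimg g B = B'

/-- (Inv).  `Ind A B C` is read `B ⫫_A C`. -/
def InvAx (Ind : L.Substructure M → L.Substructure M → L.Substructure M → Prop) : Prop :=
  ∀ A B C : L.Substructure M, A.FG → B.FG → C.FG → ∀ g : M ≃[L] M,
    Ind A B C → Ind (aimg g A) (aimg g B) (aimg g C)

/-- (Ex-left) -/
def ExLeftAx (Ind : L.Substructure M → L.Substructure M → L.Substructure M → Prop) : Prop :=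
  ∀ A B C : L.Substructure M, A.FG → B.FG → C.FG →
    ∃ B' : L.Substructure M, EquivOver A B B' ∧ Ind A B' C

/-- (Ex-right) -/
def ExRightAx (Ind : L.Substructure M → L.Substructure M → L.Substructure M → Prop) : Prop :=
  ∀ A B C : L.Substructure M, A.FG → B.FG → C.FG →
    ∃ C' : L.Substructure M, EquivOver A C C' ∧ Ind A B C'

/-- (Sta-left) -/
def StaLeftAx (Ind : L.Substructure M → L.Substructure M → L.Substructure M → Prop) : Prop :=
  ∀ A B B' C : L.Substructure M, A.FG → B.FG → B'.FG → C.FG →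
    Ind A B C → Ind A B' C →
    ∀ g : M ≃[L] M, Fixes g A → aimg g B = B' →
      ∃ h : M ≃[L] M, Fixes h (A ⊔ C) ∧ ∀ b ∈ B, h b = g b

/-- (Sta-right) -/
def StaRightAx (Ind : L.Substructure M → L.Substructure M → L.Substructure M → Prop) : Prop :=
  ∀ A B C C' : L.Substructure M, A.FG → B.FG → C.FG → C'.FG →
    Ind A B C → Ind A B C' →
    ∀ g : M ≃[L] M, Fixes g A → aimg g C = C' →
      ∃ h : M ≃[L] M, Fixes h (A ⊔ B) ∧ ∀ c ∈ C, h c = g c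

/-- (Mon-left) -/
def MonLeftAx (Ind : L.Substructure M → L.Substructure M → L.Substructure M → Prop) : Prop :=
  ∀ A B C D : L.Substructure M, A.FG → B.FG → C.FG → D.FG →
    Ind A (B ⊔ D) C → Ind A B C ∧ Ind (A ⊔ B) D C

/-- (Mon-right) -/
def MonRightAx (Ind : L.Substructure M → L.Substructure M → L.Substructure M → Prop) : Prop :=
  ∀ A B C D : L.Substructure M, A.FG → B.FG → C.FG → D.FG →
    Ind A B (C ⊔ D) → Ind A B C ∧ Ind (A ⊔ C) B D

/-- (Tr-left) -/
def TrLeftAx (Ind : L.Substructure M → L.Substructure M → L.Substructure M → Prop) : Prop :=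
  ∀ A B C D : L.Substructure M, A.FG → B.FG → C.FG → D.FG →
    Ind A B C → Ind (A ⊔ B) D C → Ind A (B ⊔ D) C

/-- (Tr-right) -/
def TrRightAx (Ind : L.Substructure M → L.Substructure M → L.Substructure M → Prop) : Prop :=
  ∀ A B C D : L.Substructure M, A.FG → B.FG → C.FG → D.FG →
    Ind A B C → Ind (A ⊔ C) B D → Ind A B (C ⊔ D)

/-- A stationary weak independence relation (SWIR) on `M`. -/
structure IsSWIR (Ind : L.Substructure M → L.Substructure M → L.Substructure M → Prop) : Prop where
  inv : InvAx Ind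
  exLeft : ExLeftAx Ind
  exRight : ExRightAx Ind
  staLeft : StaLeftAx Ind
  staRight : StaRightAx Ind
  monLeft : MonLeftAx Ind
  monRight : MonRightAx Ind


section Aux

variable {L : Language} {M : Type*} [L.Structure M]

lemma fixes_iff_le {g : M ≃[L] M} {A : L.Substructure M} :
    Fixes g A ↔ A ≤ (Language.Hom.eqLocus g.toHom (Language.Hom.id L M)) := Iff.rfl

lemma Fixes.sup {g : M ≃[L] M} {A B : L.Substructure M} (hA : Fixes g A) (hB : Fixes g B) :
    Fixes g (A ⊔ B) :=
  fixes_iff_le.mpr (sup_le (fixes_iff_le.mp hA) (fixes_iff_le.mp hB))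

lemma Fixes.mono {g : M ≃[L] M} {A B : L.Substructure M} (h : Fixes g A) (hle : B ≤ A) :
    Fixes g B := fun a ha => h a (hle ha)

lemma Fixes.aimg_eq {g : M ≃[L] M} {A : L.Substructure M} (h : Fixes g A) :
    aimg g A = A := by
  ext x
  simp only [aimg, Language.Substructure.mem_map]
  constructor
  · rintro ⟨y, hy, rfl⟩; rwa [show g.toHom y = y from h y hy]
  · exact fun hx => ⟨x, hx, h x hx⟩

lemma aimg_sup (g : M ≃[L] M) (A B : L.Substructure M) :
    aimg g (A ⊔ B) = aimg g A ⊔ aimg g B :=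
  Language.Substructure.map_sup A B g.toHom

lemma aimg_trans (g h : M ≃[L] M) (A : L.Substructure M) :
    aimg (h.comp g) A = aimg h (aimg g A) := by
  ext x
  simp only [aimg, Language.Substructure.mem_map]
  constructor
  · rintro ⟨y, hy, rfl⟩; exact ⟨g y, ⟨y, hy, rfl⟩, rfl⟩
  · rintro ⟨y, ⟨z, hz, rfl⟩, rfl⟩; exact ⟨z, hz, rfl⟩

lemma aimg_symm {g : M ≃[L] M} {A B : L.Substructure M} (h : aimg g A = B) :
    aimg g.symm B = A := by
  subst h
  ext x
  simp only [aimg, Language.Substructure.mem_map]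
  constructor
  · rintro ⟨y, ⟨z, hz, rfl⟩, rfl⟩
    simpa using hz
  · exact fun hx => ⟨g x, ⟨x, hx, rfl⟩, by simp⟩

lemma aimg_congr {g h : M ≃[L] M} {A : L.Substructure M}
    (hgh : ∀ a ∈ A, g a = h a) : aimg g A = aimg h A := by
  ext x
  simp only [aimg, Language.Substructure.mem_map]
  constructor
  · rintro ⟨y, hy, rfl⟩; exact ⟨y, hy, (hgh y hy).symm⟩
  · rintro ⟨y, hy, rfl⟩; exact ⟨y, hy, hgh y hy⟩

lemma aimg_fg {g : M ≃[L] M} {A : L.Substructure M} (h : A.FG) : (aimg g A).FG :=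
  h.map g.toHom

end Aux

/-- a ternary relation on the finitely generated substructures of `M` satisfying
(Inv), (Ex-left), (Ex-right), (Sta-left), (Sta-right), (Tr-left) and (Tr-right) also satisfies
(Mon-left) and (Mon-right), and hence is a SWIR on `M`. -/

theorem swir_of_inv_ex_sta_tr
    (Ind : L.Substructure M → L.Substructure M → L.Substructure M → Prop)
    (hInv : InvAx Ind) (hExL : ExLeftAx Ind) (hExR : ExRightAx Ind)
    (hStaL : StaLeftAx Ind) (hStaR : StaRightAx Ind)
    (hTrL : TrLeftAx Ind) (hTrR : TrRightAx Ind) :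
    MonLeftAx Ind ∧ MonRightAx Ind ∧ IsSWIR Ind := by
  have monL : MonLeftAx Ind := by
    intro A B C D hA hB hC hD hBD
    obtain ⟨B', ⟨g, hgA, hgB⟩, hB'C⟩ := hExL A B C hA hB hC
    have hB' : B'.FG := hgB ▸ aimg_fg hB
    set D₁ := aimg g D with hD₁def
    have hD₁ : D₁.FG := aimg_fg hD
    obtain ⟨D', ⟨h, hhAB', hhD⟩, hD'C⟩ := hExL (A ⊔ B') D₁ C (hA.sup hB') hD₁ hC
    have hD' : D'.FG := hhD ▸ aimg_fg hD₁
    have hB'D'C : Ind A (B' ⊔ D') C := hTrL A B' C D' hA hB' hC hD' hB'C hD'C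
    set k : M ≃[L] M := h.comp g with hk
    have hkA : Fixes k A := fun a ha => by
      simp only [hk, Language.Equiv.comp_apply, hgA a ha]
      exact hhAB' a (le_sup_left (a := A) (b := B') ha)
    have hhB' : Fixes h B' := hhAB'.mono le_sup_right
    have hkBD : aimg k (B ⊔ D) = B' ⊔ D' := by
      rw [aimg_trans, aimg_sup, aimg_sup, hgB, hhB'.aimg_eq, ← hD₁def, hhD]
    obtain ⟨f, hfAC, hfk⟩ := hStaL A (B ⊔ D) (B' ⊔ D') C hA (hB.sup hD) (hB'.sup hD') hC
      hBD hB'D'C k hkA hkBD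
    have hfA : Fixes f A := hfAC.mono le_sup_left
    have hfC : Fixes f C := hfAC.mono le_sup_right
    have hfB : aimg f B = B' := by
      rw [aimg_congr (fun b hb => hfk b (le_sup_left (a := B) (b := D) hb)),
        hk, aimg_trans, hgB, hhB'.aimg_eq]
    have hfD : aimg f D = D' := by
      rw [aimg_congr (fun d hd => hfk d (le_sup_right (a := B) (b := D) hd)),
        hk, aimg_trans, ← hD₁def, hhD]
    constructor
    · have := hInv A B' C hA hB' hC f.symm hB'C
      rwa [aimg_symm hfA.aimg_eq, aimg_symm hfB, aimg_symm hfC.aimg_eq] at this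
    · have := hInv (A ⊔ B') D' C (hA.sup hB') hD' hC f.symm hD'C
      rwa [aimg_sup, aimg_symm hfA.aimg_eq, aimg_symm hfB, aimg_symm hfD,
        aimg_symm hfC.aimg_eq] at this
  have monR : MonRightAx Ind := by
    intro A B C D hA hB hC hD hCD
    obtain ⟨C', ⟨g, hgA, hgC⟩, hBC'⟩ := hExR A B C hA hB hC
    have hC' : C'.FG := hgC ▸ aimg_fg hC
    set D₁ := aimg g D with hD₁def
    have hD₁ : D₁.FG := aimg_fg hD
    obtain ⟨D', ⟨h, hhAC', hhD⟩, hBD'⟩ := hExR (A ⊔ C') B D₁ (hA.sup hC') hB hD₁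
    have hD' : D'.FG := hhD ▸ aimg_fg hD₁
    have hBC'D' : Ind A B (C' ⊔ D') := hTrR A B C' D' hA hB hC' hD' hBC' hBD'
    set k : M ≃[L] M := h.comp g with hk
    have hkA : Fixes k A := fun a ha => by
      simp only [hk, Language.Equiv.comp_apply, hgA a ha]
      exact hhAC' a (le_sup_left (a := A) (b := C') ha)
    have hhC' : Fixes h C' := hhAC'.mono le_sup_right
    have hkCD : aimg k (C ⊔ D) = C' ⊔ D' := by
      rw [aimg_trans, aimg_sup, aimg_sup, hgC, hhC'.aimg_eq, ← hD₁def, hhD]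
    obtain ⟨f, hfAB, hfk⟩ := hStaR A B (C ⊔ D) (C' ⊔ D') hA hB (hC.sup hD) (hC'.sup hD')
      hCD hBC'D' k hkA hkCD
    have hfA : Fixes f A := hfAB.mono le_sup_left
    have hfB : Fixes f B := hfAB.mono le_sup_right
    have hfC : aimg f C = C' := by
      rw [aimg_congr (fun c hc => hfk c (le_sup_left (a := C) (b := D) hc)),
        hk, aimg_trans, hgC, hhC'.aimg_eq]
    have hfD : aimg f D = D' := by
      rw [aimg_congr (fun d hd => hfk d (le_sup_right (a := C) (b := D) hd)),
        hk, aimg_trans, ← hD₁def, hhD]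
    constructor
    · have := hInv A B C' hA hB hC' f.symm hBC'
      rwa [aimg_symm hfA.aimg_eq, aimg_symm hfB.aimg_eq, aimg_symm hfC] at this
    · have := hInv (A ⊔ C') B D' (hA.sup hC') hB hD' f.symm hBD'
      rwa [aimg_sup, aimg_symm hfA.aimg_eq, aimg_symm hfB.aimg_eq, aimg_symm hfC,
        aimg_symm hfD] at this
  exact ⟨monL, monR, ⟨hInv, hExL, hExR, hStaL, hStaR, monL, monR⟩⟩


end Swir
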